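/- Let ρ be a Borel probability measure on ℝ whose support is unbounded, and let X ⊂ ℝ be a bounded Borel set. Then sup_{x∈ℝ} ρ(X − x) < 1. -/
import Mathlib


open MeasureTheory

/-- The (closed) support of a Borel measure on `ℝ`: the set of points all of whose
open neighbourhoods have positive measure. -/
def msupport (ρ : Measure ℝ) : Set ℝ :=
  {x | ∀ U : Set ℝ, IsOpen U → x ∈ U → 0 < ρ U}

/-- If `ρ` is a Borel probability measure on `ℝ` with unbounded support and `X ⊂ ℝ`
is a bounded Borel set, then `sup_{x ∈ ℝ} ρ(X − x) < 1`.
(Here `X − x = {y − x : y ∈ X} = (· + x)⁻¹ X`.) -/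
theorem stmt11 (ρ : Measure ℝ) [IsProbabilityMeasure ρ]
    (hsupp : ¬ Bornology.IsBounded (msupport ρ))
    (X : Set ℝ) (hXm : MeasurableSet X) (hXb : Bornology.IsBounded X) :
    (⨆ x : ℝ, ρ ((· + x) ⁻¹' X)) < 1 := by
  obtain ⟨R, hR⟩ := isBounded_iff_forall_norm_le.mp hXb
  set R' : ℝ := max R 0 with hR'def
  have hRn : ∀ y ∈ X, |y| ≤ R' := fun y hy => le_trans (hR y hy) (le_max_left _ _)
  have hne : (msupport ρ).Nonempty := by
    by_contra h
    rw [Set.not_nonempty_iff_eq_empty] at h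
    exact hsupp (h ▸ Bornology.isBounded_empty)
  obtain ⟨a, ha⟩ := hne
  rw [isBounded_iff_forall_norm_le] at hsupp
  push_neg at hsupp
  obtain ⟨b, hb, hbnorm⟩ := hsupp (|a| + 2 * R' + 2)
  have hma : 0 < ρ (Metric.ball a 1) := ha _ Metric.isOpen_ball (Metric.mem_ball_self one_pos)
  have hmb : 0 < ρ (Metric.ball b 1) := hb _ Metric.isOpen_ball (Metric.mem_ball_self one_pos)
  set m := min (ρ (Metric.ball a 1)) (ρ (Metric.ball b 1)) with hmdef
  have hm0 : 0 < m := lt_min hma hmb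
  have key : ∀ x : ℝ, ρ ((· + x) ⁻¹' X) ≤ 1 - m := by
    intro x
    have hdisj : Disjoint ((· + x) ⁻¹' X) (Metric.ball a 1) ∨
        Disjoint ((· + x) ⁻¹' X) (Metric.ball b 1) := by
      by_contra h
      push_neg at h
      obtain ⟨h1, h2⟩ := h
      rw [Set.not_disjoint_iff] at h1 h2
      obtain ⟨p, hpX, hpa⟩ := h1
      obtain ⟨q, hqX, hqb⟩ := h2
      have hp : |p + x| ≤ R' := hRn _ hpX
      have hq : |q + x| ≤ R' := hRn _ hqX
      rw [Metric.mem_ball, Real.dist_eq] at hpa hqb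
      have e1 : |a - b| ≤ |a - p| + (|p + x| + |q + x|) + |q - b| := by
        have heq : a - b = (a - p) + ((p + x) - (q + x)) + (q - b) := by ring
        calc |a - b| = |(a - p) + ((p + x) - (q + x)) + (q - b)| := by rw [heq]
          _ ≤ |(a - p) + ((p + x) - (q + x))| + |q - b| := abs_add_le _ _
          _ ≤ (|a - p| + |(p + x) - (q + x)|) + |q - b| := by
              gcongr; exact abs_add_le _ _
          _ ≤ (|a - p| + (|p + x| + |q + x|)) + |q - b| := by
              gcongr; exact abs_sub _ _
      have e2 : |b| - |a| ≤ |a - b| := by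
        have := abs_sub_abs_le_abs_sub b a
        rw [abs_sub_comm] at this
        linarith
      have hap : |a - p| < 1 := by rw [abs_sub_comm]; exact hpa
      have hqb' : |q - b| < 1 := hqb
      rw [Real.norm_eq_abs] at hbnorm
      linarith
    have hball : ∀ c : ℝ, Disjoint ((· + x) ⁻¹' X) (Metric.ball c 1) →
        ρ ((· + x) ⁻¹' X) ≤ 1 - ρ (Metric.ball c 1) := by
      intro c hd
      have hmeas : ρ ((· + x) ⁻¹' X ∪ Metric.ball c 1)
          = ρ ((· + x) ⁻¹' X) + ρ (Metric.ball c 1) :=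
        measure_union hd measurableSet_ball
      have hle : ρ ((· + x) ⁻¹' X) + ρ (Metric.ball c 1) ≤ 1 := by
        rw [← hmeas]; exact prob_le_one
      exact ENNReal.le_sub_of_add_le_right (measure_ne_top ρ _) hle
    rcases hdisj with hd | hd
    · exact le_trans (hball a hd) (tsub_le_tsub_left (min_le_left _ _) 1)
    · exact le_trans (hball b hd) (tsub_le_tsub_left (min_le_right _ _) 1)
  calc (⨆ x : ℝ, ρ ((· + x) ⁻¹' X)) ≤ 1 - m := iSup_le key
    _ < 1 := ENNReal.sub_lt_self ENNReal.one_ne_top one_ne_zero hm0.ne'
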